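/- arXiv:1605.03778 — 12 statements merged into one kernel-verified Lean document; each statement's English description precedes it below -/
import Mathlib

section
/- Every (Frobenius) pseudo-variety is an R-variety. That is, if 𝓟 is a pseudo-variety, then 𝓟 has a maximum element Δ(𝓟) with respect to inclusion, is closed under pairwise intersection, and for every S ∈ 𝓟 with S ≠ Δ(𝓟) one has S ∪ {F_{Δ(𝓟)}(S)} ∈ 𝓟. -/
/-- A numerical semigroup: a subset of ℕ containing 0, closed under addition,
with finite complement. -/
def IsNumericalSemigroup (S : Set ℕ) : Prop :=
  0 ∈ S ∧ (∀ a ∈ S, ∀ b ∈ S, a + b ∈ S) ∧ Sᶜ.Finite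

/-- The Frobenius number of `S` restricted to `T`: `max (T \ S)`. -/
noncomputable def FrobR (T S : Set ℕ) : ℕ := sSup (T \ S)

/-- The Frobenius number of `S`: `max (ℕ \ S)`. -/
noncomputable def Frob (S : Set ℕ) : ℕ := sSup Sᶜ

/-- `R` is an R-variety with maximum element `Δ`. -/
structure IsRVariety (R : Set (Set ℕ)) (Δ : Set ℕ) : Prop where
  sgrp : ∀ S ∈ R, IsNumericalSemigroup S
  max_mem : Δ ∈ R
  subset_max : ∀ S ∈ R, S ⊆ Δ
  inter_mem : ∀ S ∈ R, ∀ T ∈ R, S ∩ T ∈ R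
  step : ∀ S ∈ R, S ≠ Δ → S ∪ {FrobR Δ S} ∈ R

/-- `P` is a (Frobenius) pseudo-variety with maximum element `Δ`. -/
structure IsPseudoVariety (P : Set (Set ℕ)) (Δ : Set ℕ) : Prop where
  sgrp : ∀ S ∈ P, IsNumericalSemigroup S
  max_mem : Δ ∈ P
  subset_max : ∀ S ∈ P, S ⊆ Δ
  inter_mem : ∀ S ∈ P, ∀ T ∈ P, S ∩ T ∈ P
  step : ∀ S ∈ P, S ≠ Δ → S ∪ {Frob S} ∈ P

/-- `V` is a (Frobenius) variety. -/
structure IsVariety (V : Set (Set ℕ)) : Prop where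
  nonempty : V.Nonempty
  sgrp : ∀ S ∈ V, IsNumericalSemigroup S
  inter_mem : ∀ S ∈ V, ∀ T ∈ V, S ∩ T ∈ V
  step : ∀ S ∈ V, S ≠ Set.univ → S ∪ {Frob S} ∈ V

/-- `M` is an `F`-monoid: an intersection of a nonempty subfamily of `F`. -/
def IsFMonoid (F : Set (Set ℕ)) (M : Set ℕ) : Prop :=
  ∃ G : Set (Set ℕ), G ⊆ F ∧ G.Nonempty ∧ M = ⋂₀ G

/-- The `F`-monoid generated by `A`: the intersection of all `F`-monoids containing `A`. -/
def FGen (F : Set (Set ℕ)) (A : Set ℕ) : Set ℕ :=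
  ⋂₀ {M | IsFMonoid F M ∧ A ⊆ M}

/-- `A` is a minimal `F`-system of generators of `M`. -/
def IsMinGenSystem (F : Set (Set ℕ)) (A M : Set ℕ) : Prop :=
  FGen F A = M ∧ ∀ B ⊂ A, FGen F B ≠ M

/-- A submonoid of `(ℕ, +)`. -/
def IsNatSubmonoid (M : Set ℕ) : Prop :=
  0 ∈ M ∧ ∀ a ∈ M, ∀ b ∈ M, a + b ∈ M

/-- The chain of `S` restricted to `Δ`. -/
def RestrictedChain (S Δ : Set ℕ) : Set (Set ℕ) :=
  {X | ∃ n : ℕ, X = S ∪ {x ∈ Δ | n ≤ x}}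

/-- Every pseudo-variety is an R-variety. -/
theorem pseudoVariety_isRVariety (P : Set (Set ℕ)) (Δ : Set ℕ)
    (hP : IsPseudoVariety P Δ) : IsRVariety P Δ := by
  refine ⟨hP.sgrp, hP.max_mem, hP.subset_max, hP.inter_mem, ?_⟩
  intro S hS hne
  have key : FrobR Δ S = Frob S := by
    have hfin : Sᶜ.Finite := (hP.sgrp S hS).2.2
    have hsub : S ⊆ Δ := hP.subset_max S hS
    have hne' : (Δ \ S).Nonempty := by
      rcases Set.exists_of_ssubset (lt_of_le_of_ne hsub hne) with ⟨x, hx, hx'⟩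
      exact ⟨x, hx, hx'⟩
    have hsubc : Δ \ S ⊆ Sᶜ := fun x hx => hx.2
    have hneC : Sᶜ.Nonempty := hne'.mono hsubc
    have hF_mem : Frob S ∈ Sᶜ := hneC.csSup_mem hfin
    have hF_Δ : Frob S ∈ Δ := by
      have := hP.subset_max _ (hP.step S hS hne)
      exact this (Set.mem_union_right _ rfl)
    have h1 : FrobR Δ S ≤ Frob S :=
      csSup_le_csSup hfin.bddAbove hne' hsubc
    have h2 : Frob S ≤ FrobR Δ S :=
      le_csSup ((hfin.subset hsubc).bddAbove) ⟨hF_Δ, hF_mem⟩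
    exact le_antisymm h1 h2
  rw [key]
  exact hP.step S hS hne
end

section
/- Let 𝓡 be an R-variety. Then 𝓡 is a pseudo-variety if and only if F(S) ∈ Δ(𝓡) for all S ∈ 𝓡 such that S ≠ Δ(𝓡), where F(S) = max(ℕ \ S) is the Frobenius number of S. -/
/-- An R-variety is a pseudo-variety iff `F(S) ∈ Δ(𝓡)` for all
`S ∈ 𝓡` with `S ≠ Δ(𝓡)`. -/
theorem rVariety_isPseudoVariety_iff (R : Set (Set ℕ)) (Δ : Set ℕ)
    (hR : IsRVariety R Δ) :
    IsPseudoVariety R Δ ↔ ∀ S ∈ R, S ≠ Δ → Frob S ∈ Δ := by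
  constructor
  · intro hP S hS hne
    exact hP.subset_max _ (hP.step S hS hne) (Or.inr rfl)
  · intro h
    have key : ∀ S ∈ R, S ≠ Δ → Frob S = FrobR Δ S := by
      intro S hS hne
      have hsub : S ⊆ Δ := hR.subset_max S hS
      have hfin : Sᶜ.Finite := (hR.sgrp S hS).2.2
      have hbdd : BddAbove Sᶜ := hfin.bddAbove
      have hne' : Sᶜ.Nonempty := by
        obtain ⟨x, hxΔ, hxS⟩ := Set.exists_of_ssubset (hsub.ssubset_of_ne hne)
        exact ⟨x, hxS⟩
      have hmem : Frob S ∈ Sᶜ := Nat.sSup_mem hne' hbdd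
      have hΔ : Frob S ∈ Δ := h S hS hne
      apply le_antisymm
      · exact le_csSup (hbdd.mono (Set.diff_subset_compl Δ S)) ⟨hΔ, hmem⟩
      · exact csSup_le_csSup hbdd ⟨Frob S, hΔ, hmem⟩
          (fun x hx => Set.diff_subset_compl Δ S hx)
    exact {
      sgrp := hR.sgrp
      max_mem := hR.max_mem
      subset_max := hR.subset_max
      inter_mem := hR.inter_mem
      step := fun S hS hne => by
        rw [key S hS hne]; exact hR.step S hS hne }
end

section
/- Let 𝓥 be a variety and let T be a numerical semigroup. Then 𝓥_T = {S ∩ T | S ∈ 𝓥} is an R-variety, and its maximum element with respect to inclusion is T. -/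
lemma chain_mem_aux (V : Set (Set ℕ)) (hV : IsVariety V) (S : Set ℕ) (hS : S ∈ V)
    (k : ℕ) : S ∪ {n | k ≤ n ∧ n ∉ S} ∈ V := by
  obtain ⟨h0, hadd, hfin⟩ := hV.sgrp S hS
  obtain ⟨B, hB⟩ := hfin.bddAbove
  have hN : ∀ n, n ∉ S → n < B + 1 := fun n hn => Nat.lt_succ_of_le (hB hn)
  have key : ∀ d k, B + 1 ≤ k + d → S ∪ {n | k ≤ n ∧ n ∉ S} ∈ V := by
    intro d
    induction d with
    | zero =>
      intro k hk
      have hempty : {n | k ≤ n ∧ n ∉ S} = ∅ := by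
        ext n
        simp only [Set.mem_setOf_eq, Set.mem_empty_iff_false, iff_false, not_and]
        intro h1 h2
        exact absurd (hN n h2) (by omega)
      rw [hempty, Set.union_empty]; exact hS
    | succ d ih =>
      intro k hk
      by_cases hkS : k ∈ S
      · have heq : S ∪ {n | k ≤ n ∧ n ∉ S} = S ∪ {n | k + 1 ≤ n ∧ n ∉ S} := by
          ext n
          simp only [Set.mem_union, Set.mem_setOf_eq]
          by_cases hn : n ∈ S
          · simp [hn]
          · have hne : n ≠ k := fun h => hn (h ▸ hkS)
            simp only [hn, not_false_eq_true, and_true, false_or]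
            omega
        rw [heq]; exact ih (k + 1) (by omega)
      · have hS1 : S ∪ {n | k + 1 ≤ n ∧ n ∉ S} ∈ V := ih (k + 1) (by omega)
        have hkn : k ∉ S ∪ {n | k + 1 ≤ n ∧ n ∉ S} := by
          simp only [Set.mem_union, Set.mem_setOf_eq]
          push_neg
          exact ⟨hkS, fun h => absurd h (by omega)⟩
        have hne : S ∪ {n | k + 1 ≤ n ∧ n ∉ S} ≠ Set.univ := by
          intro h; exact hkn (h ▸ Set.mem_univ k)
        have hbd : ∀ n ∈ (S ∪ {n | k + 1 ≤ n ∧ n ∉ S})ᶜ, n ≤ k := by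
          intro n hn
          simp only [Set.mem_compl_iff, Set.mem_union, Set.mem_setOf_eq] at hn
          push_neg at hn
          by_contra h
          exact hn.1 (hn.2 (by omega))
        have hF : Frob (S ∪ {n | k + 1 ≤ n ∧ n ∉ S}) = k := by
          unfold Frob
          apply le_antisymm
          · exact csSup_le ⟨k, hkn⟩ hbd
          · exact le_csSup ⟨k, hbd⟩ hkn
        have := hV.step _ hS1 hne
        rw [hF] at this
        have heq : (S ∪ {n | k + 1 ≤ n ∧ n ∉ S}) ∪ {k} = S ∪ {n | k ≤ n ∧ n ∉ S} := by
          ext n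
          simp only [Set.mem_union, Set.mem_setOf_eq, Set.mem_singleton_iff]
          by_cases hn : n ∈ S
          · have : n ≠ k := fun h => hkS (h ▸ hn)
            simp [hn, this]
          · simp only [hn, not_false_eq_true, and_true, false_or]
            omega
        rw [heq] at this
        exact this
  by_cases hk : B + 1 ≤ k
  · exact key 0 k (by omega)
  · exact key (B + 1 - k) k (by omega)

/-- If `𝓥` is a variety and `T` a numerical semigroup, then
`𝓥_T = {S ∩ T | S ∈ 𝓥}` is an R-variety with maximum `T`. -/
theorem variety_inter_isRVariety (V : Set (Set ℕ)) (hV : IsVariety V)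
    (T : Set ℕ) (hT : IsNumericalSemigroup T) :
    IsRVariety {X | ∃ S ∈ V, X = S ∩ T} T := by
  obtain ⟨h0T, haddT, hfinT⟩ := hT
  have huniv : Set.univ ∈ V := by
    obtain ⟨S0, hS0⟩ := hV.nonempty
    have := chain_mem_aux V hV S0 hS0 0
    have heq : S0 ∪ {n | 0 ≤ n ∧ n ∉ S0} = Set.univ := by
      ext n
      simp only [Set.mem_union, Set.mem_setOf_eq, Set.mem_univ, iff_true, Nat.zero_le,
        true_and]
      tauto
    rwa [heq] at this
  constructor
  · rintro X ⟨S, hS, rfl⟩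
    obtain ⟨h0S, haddS, hfinS⟩ := hV.sgrp S hS
    refine ⟨⟨h0S, h0T⟩, ?_, ?_⟩
    · rintro a ⟨haS, haT⟩ b ⟨hbS, hbT⟩
      exact ⟨haddS a haS b hbS, haddT a haT b hbT⟩
    · rw [Set.compl_inter]
      exact hfinS.union hfinT
  · exact ⟨Set.univ, huniv, (Set.univ_inter T).symm⟩
  · rintro X ⟨S, hS, rfl⟩
    exact Set.inter_subset_right
  · rintro X ⟨S, hS, rfl⟩ Y ⟨S', hS', rfl⟩
    refine ⟨S ∩ S', hV.inter_mem S hS S' hS', ?_⟩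
    ext n; simp only [Set.mem_inter_iff]; tauto
  · rintro X ⟨S, hS, rfl⟩ hne
    obtain ⟨h0S, haddS, hfinS⟩ := hV.sgrp S hS
    have hTS : T \ (S ∩ T) = T \ S := by
      ext n; simp only [Set.mem_diff, Set.mem_inter_iff]; tauto
    have hfeq : FrobR T (S ∩ T) = sSup (T \ S) := by
      unfold FrobR; rw [hTS]
    have hnonempty : (T \ S).Nonempty := by
      rw [Set.nonempty_iff_ne_empty]
      intro h
      exact hne (Set.inter_eq_right.mpr (Set.diff_eq_empty.mp h))
    have hbd : BddAbove (T \ S) :=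
      (hfinS.subset (fun n hn => hn.2)).bddAbove
    set f := FrobR T (S ∩ T) with hf_def
    have hfmem : f ∈ T \ S := by
      rw [hfeq]
      exact Nat.sSup_mem hnonempty hbd
    have hub : ∀ n ∈ T \ S, n ≤ f := by
      intro n hn
      rw [hfeq]
      exact le_csSup hbd hn
    refine ⟨S ∪ {n | f ≤ n ∧ n ∉ S}, chain_mem_aux V hV S hS f, ?_⟩
    ext n
    simp only [Set.mem_union, Set.mem_inter_iff, Set.mem_singleton_iff, Set.mem_setOf_eq]
    constructor
    · rintro (⟨hnS, hnT⟩ | rfl)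
      · exact ⟨Or.inl hnS, hnT⟩
      · exact ⟨Or.inr ⟨le_refl f, hfmem.2⟩, hfmem.1⟩
    · rintro ⟨hnS | ⟨hfn, hnS⟩, hnT⟩
      · exact Or.inl ⟨hnS, hnT⟩
      · right
        have := hub n ⟨hnT, hnS⟩
        omega
end

section
/- Every R-variety arises from a variety by intersecting with a numerical semigroup: if 𝓡 is an R-variety, then there exist a variety 𝓥 and a numerical semigroup T such that 𝓡 = {S ∩ T | S ∈ 𝓥}. -/
lemma aux_frob_adjoin (X : Set ℕ) (hX : IsNumericalSemigroup X) (hne : X ≠ Set.univ) :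
    Frob X ∈ Xᶜ ∧ (∀ y ∈ Xᶜ, y ≤ Frob X) := by
  have hne' : Xᶜ.Nonempty := Set.nonempty_compl.mpr hne
  have hbdd : BddAbove Xᶜ := hX.2.2.bddAbove
  exact ⟨Nat.sSup_mem hne' hbdd, fun y hy => le_csSup hbdd hy⟩

/-- Every R-variety is of the form `{S ∩ T | S ∈ 𝓥}` for some
variety `𝓥` and numerical semigroup `T`. -/
theorem rVariety_eq_variety_inter (R : Set (Set ℕ)) (Δ : Set ℕ)
    (hR : IsRVariety R Δ) :
    ∃ (V : Set (Set ℕ)) (T : Set ℕ), IsVariety V ∧ IsNumericalSemigroup T ∧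
      R = {X | ∃ S ∈ V, X = S ∩ T} := by
  classical
  obtain ⟨hsgrp, hmax, hsub, hinter, hstep⟩ := hR
  refine ⟨{X | IsNumericalSemigroup X ∧ X ∩ Δ ∈ R}, Δ, ?_, hsgrp Δ hmax, ?_⟩
  · constructor
    · -- nonempty
      refine ⟨Set.univ, ⟨⟨trivial, fun _ _ _ _ => trivial, by simp⟩, ?_⟩⟩
      simpa using hmax
    · exact fun S hS => hS.1
    · -- intersection
      rintro S ⟨hSsg, hSR⟩ T ⟨hTsg, hTR⟩
      refine ⟨⟨⟨hSsg.1, hTsg.1⟩, ?_, ?_⟩, ?_⟩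
      · rintro a ⟨haS, haT⟩ b ⟨hbS, hbT⟩
        exact ⟨hSsg.2.1 a haS b hbS, hTsg.2.1 a haT b hbT⟩
      · rw [Set.compl_inter]
        exact hSsg.2.2.union hTsg.2.2
      · have h : (S ∩ T) ∩ Δ = (S ∩ Δ) ∩ (T ∩ Δ) := by
          ext x; simp [Set.mem_inter_iff]; tauto
        rw [h]
        exact hinter _ hSR _ hTR
    · -- step
      rintro X ⟨hXsg, hXR⟩ hXne
      obtain ⟨hf1, hf2⟩ := aux_frob_adjoin X hXsg hXne
      set f := Frob X with hf
      have hfpos : f ≠ 0 := fun h => hf1 (h ▸ hXsg.1)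
      have hbig : ∀ n, f < n → n ∈ X := by
        intro n hn
        by_contra hc
        exact absurd (hf2 n hc) (by omega)
      have hXsg' : IsNumericalSemigroup (X ∪ {f}) := by
        refine ⟨Or.inl hXsg.1, ?_, ?_⟩
        · rintro a (ha | ha) b (hb | hb)
          · exact Or.inl (hXsg.2.1 a ha b hb)
          · simp only [Set.mem_singleton_iff] at hb; subst hb
            rcases Nat.eq_zero_or_pos a with h | h
            · subst h; exact Or.inr (by simp)
            · exact Or.inl (hbig _ (by omega))
          · simp only [Set.mem_singleton_iff] at ha; subst ha
            rcases Nat.eq_zero_or_pos b with h | h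
            · subst h; exact Or.inr (by simp)
            · exact Or.inl (hbig _ (by omega))
          · simp only [Set.mem_singleton_iff] at ha hb; subst ha; subst hb
            exact Or.inl (hbig _ (by omega))
        · exact hXsg.2.2.subset (by intro x hx; simp only [Set.compl_union, Set.mem_inter_iff] at hx; exact hx.1)
      refine ⟨hXsg', ?_⟩
      by_cases hfΔ : f ∈ Δ
      · have hXΔne : X ∩ Δ ≠ Δ := by
          intro h
          have hfm : f ∈ X ∩ Δ := by rw [h]; exact hfΔ
          exact hf1 hfm.1
        have hdiff : Δ \ (X ∩ Δ) = Δ \ X := by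
          rw [Set.diff_inter, Set.diff_self, Set.union_empty]
        have hFr : FrobR Δ (X ∩ Δ) = f := by
          rw [FrobR, hdiff]
          apply le_antisymm
          · refine csSup_le ⟨f, hfΔ, hf1⟩ ?_
            intro y hy
            exact hf2 y hy.2
          · apply le_csSup
            · exact (hXsg.2.2.subset (fun x hx => hx.2)).bddAbove
            · exact ⟨hfΔ, hf1⟩
        have hmem := hstep _ hXR hXΔne
        rw [hFr] at hmem
        have heq : (X ∪ {f}) ∩ Δ = (X ∩ Δ) ∪ {f} := by
          ext x
          simp only [Set.mem_inter_iff, Set.mem_union, Set.mem_singleton_iff]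
          constructor
          · rintro ⟨h | h, hΔ⟩
            · exact Or.inl ⟨h, hΔ⟩
            · exact Or.inr h
          · rintro (⟨h1, h2⟩ | h)
            · exact ⟨Or.inl h1, h2⟩
            · exact ⟨Or.inr h, h ▸ hfΔ⟩
        rw [heq]
        exact hmem
      · have heq : (X ∪ {f}) ∩ Δ = X ∩ Δ := by
          ext x
          simp only [Set.mem_inter_iff, Set.mem_union, Set.mem_singleton_iff]
          constructor
          · rintro ⟨h | h, hΔ⟩
            · exact ⟨h, hΔ⟩
            · exact absurd (h ▸ hΔ) hfΔ
          · rintro ⟨h1, h2⟩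
            exact ⟨Or.inl h1, h2⟩
        rw [heq]
        exact hXR
  · -- R = {X | ∃ S ∈ V, X = S ∩ Δ}
    ext S
    constructor
    · intro hSR
      have hSsg := hsgrp S hSR
      have hSΔ := hsub S hSR
      have hDS : (Δ \ S).Finite := hSsg.2.2.subset (fun x hx => hx.2)
      set m := sSup (Δ \ S) + 1 with hm
      have key : ∀ x ∈ Δ, m ≤ x → x ∈ S := by
        intro x hxΔ hxm
        by_contra hc
        have : x ≤ sSup (Δ \ S) := le_csSup hDS.bddAbove ⟨hxΔ, hc⟩
        omega
      refine ⟨S ∪ {n | m ≤ n}, ⟨⟨Or.inl hSsg.1, ?_, ?_⟩, ?_⟩, ?_⟩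
      · rintro a (ha | ha) b (hb | hb)
        · exact Or.inl (hSsg.2.1 a ha b hb)
        · exact Or.inr (by simp only [Set.mem_setOf_eq] at hb ⊢; omega)
        · exact Or.inr (by simp only [Set.mem_setOf_eq] at ha ⊢; omega)
        · exact Or.inr (by simp only [Set.mem_setOf_eq] at ha ⊢; omega)
      · refine (Set.finite_Iio m).subset ?_
        intro x hx
        simp only [Set.compl_union, Set.mem_inter_iff, Set.mem_compl_iff, Set.mem_setOf_eq] at hx
        simpa using by omega
      · have heq : (S ∪ {n | m ≤ n}) ∩ Δ = S := by
          ext x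
          simp only [Set.mem_inter_iff, Set.mem_union, Set.mem_setOf_eq]
          constructor
          · rintro ⟨h | h, hΔ⟩
            · exact h
            · exact key x hΔ h
          · intro h
            exact ⟨Or.inl h, hSΔ h⟩
        rw [heq]
        exact hSR
      · have heq : (S ∪ {n | m ≤ n}) ∩ Δ = S := by
          ext x
          simp only [Set.mem_inter_iff, Set.mem_union, Set.mem_setOf_eq]
          constructor
          · rintro ⟨h | h, hΔ⟩
            · exact h
            · exact key x hΔ h
          · intro h
            exact ⟨Or.inl h, hSΔ h⟩
        exact heq.symm
    · rintro ⟨X, ⟨hXsg, hXR⟩, rfl⟩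
      exact hXR
end

section
/- Let 𝓡 be an R-variety and let U be a numerical semigroup. Then 𝓡_U = {S ∩ U | S ∈ 𝓡} is an R-variety. -/
lemma natsg_inter {S U : Set ℕ} (hS : IsNumericalSemigroup S) (hU : IsNumericalSemigroup U) :
    IsNumericalSemigroup (S ∩ U) := by
  obtain ⟨h0, hadd, hfin⟩ := hS
  obtain ⟨h0', hadd', hfin'⟩ := hU
  refine ⟨⟨h0, h0'⟩, ?_, ?_⟩
  · rintro a ⟨ha, ha'⟩ b ⟨hb, hb'⟩
    exact ⟨hadd a ha b hb, hadd' a ha' b hb'⟩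
  · rw [Set.compl_inter]; exact hfin.union hfin'

lemma chain_mem {R : Set (Set ℕ)} {Δ : Set ℕ} (hR : IsRVariety R Δ)
    {S : Set ℕ} (hS : S ∈ R) (n : ℕ) : S ∪ {x ∈ Δ | n ≤ x} ∈ R := by
  have hfin : (Δ \ S).Finite :=
    ((hR.sgrp S hS).2.2).subset (fun x hx => hx.2)
  obtain ⟨B, hB⟩ := hfin.bddAbove
  set N := B + 1 with hNdef
  have hN : ∀ x ∈ Δ \ S, x < N := fun x hx => Nat.lt_succ_of_le (hB hx)
  -- downward induction
  have key : ∀ k : ℕ, S ∪ {x ∈ Δ | (N - k) ≤ x} ∈ R := by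
    intro k
    induction k with
    | zero =>
      have : S ∪ {x ∈ Δ | (N - 0) ≤ x} = S := by
        ext x
        simp only [Set.mem_union, Set.mem_setOf_eq, Nat.sub_zero]
        constructor
        · rintro (h | ⟨hxΔ, hxN⟩)
          · exact h
          · by_contra hxS
            exact absurd (hN x ⟨hxΔ, hxS⟩) (not_lt.mpr hxN)
        · exact fun h => Or.inl h
      rw [this]; exact hS
    | succ k ih =>
      rcases Nat.lt_or_ge k N with hk | hk
      · set m := N - (k + 1) with hm
        have hm1 : N - k = m + 1 := by omega
        rw [hm1] at ih
        by_cases hcase : m ∈ Δ ∧ m ∉ S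
        · obtain ⟨hmΔ, hmS⟩ := hcase
          set T := S ∪ {x ∈ Δ | m + 1 ≤ x} with hT
          have hTne : T ≠ Δ := by
            intro h
            have : m ∈ T := h ▸ hmΔ
            rcases this with h' | ⟨_, h'⟩
            · exact hmS h'
            · omega
          have hfr : FrobR Δ T = m := by
            have hgreat : IsGreatest (Δ \ T) m := by
              constructor
              · refine ⟨hmΔ, ?_⟩
                rintro (h' | ⟨_, h'⟩)
                · exact hmS h'
                · omega
              · rintro x ⟨hxΔ, hxT⟩
                by_contra hlt
                push_neg at hlt
                exact hxT (Or.inr ⟨hxΔ, by omega⟩)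
            exact hgreat.csSup_eq
          have hstep := hR.step T ih hTne
          rw [hfr] at hstep
          have : T ∪ {m} = S ∪ {x ∈ Δ | m ≤ x} := by
            ext x
            simp only [hT, Set.mem_union, Set.mem_setOf_eq, Set.mem_singleton_iff]
            constructor
            · rintro ((h | ⟨h1, h2⟩) | rfl)
              · exact Or.inl h
              · exact Or.inr ⟨h1, by omega⟩
              · exact Or.inr ⟨hmΔ, le_refl m⟩
            · rintro (h | ⟨h1, h2⟩)
              · exact Or.inl (Or.inl h)
              · rcases eq_or_lt_of_le h2 with heq | h3
                · exact Or.inr heq.symm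
                · exact Or.inl (Or.inr ⟨h1, h3⟩)
          rw [this] at hstep
          exact hstep
        · have : S ∪ {x ∈ Δ | m ≤ x} = S ∪ {x ∈ Δ | m + 1 ≤ x} := by
            ext x
            simp only [Set.mem_union, Set.mem_setOf_eq]
            constructor
            · rintro (h | ⟨h1, h2⟩)
              · exact Or.inl h
              · rcases eq_or_lt_of_le h2 with heq | h3
                · by_cases hxS : x ∈ S
                  · exact Or.inl hxS
                  · exact absurd ⟨by rw [heq]; exact h1, by rw [heq]; exact hxS⟩ hcase
                · exact Or.inr ⟨h1, h3⟩
            · rintro (h | ⟨h1, h2⟩)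
              · exact Or.inl h
              · exact Or.inr ⟨h1, by omega⟩
          rw [this]; exact ih
      · have : N - (k + 1) = N - k := by omega
        rw [this]; exact ih
  rcases Nat.lt_or_ge n N with hn | hn
  · have := key (N - n)
    have h2 : N - (N - n) = n := by omega
    rwa [h2] at this
  · have : S ∪ {x ∈ Δ | n ≤ x} = S := by
      ext x
      simp only [Set.mem_union, Set.mem_setOf_eq]
      constructor
      · rintro (h | ⟨h1, h2⟩)
        · exact h
        · by_contra hxS
          have := hN x ⟨h1, hxS⟩
          omega
      · exact fun h => Or.inl h
    rw [this]; exact hS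

/-- If `𝓡` is an R-variety and `U` a numerical semigroup, then
`𝓡_U = {S ∩ U | S ∈ 𝓡}` is an R-variety. -/
theorem rVariety_inter_isRVariety (R : Set (Set ℕ)) (Δ : Set ℕ)
    (hR : IsRVariety R Δ) (U : Set ℕ) (hU : IsNumericalSemigroup U) :
    ∃ Δ' : Set ℕ, IsRVariety {X | ∃ S ∈ R, X = S ∩ U} Δ' := by
  refine ⟨Δ ∩ U, ?_, ⟨Δ, hR.max_mem, rfl⟩, ?_, ?_, ?_⟩
  · rintro X ⟨S, hS, rfl⟩
    exact natsg_inter (hR.sgrp S hS) hU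
  · rintro X ⟨S, hS, rfl⟩
    exact Set.inter_subset_inter (hR.subset_max S hS) le_rfl
  · rintro X ⟨S, hS, rfl⟩ Y ⟨T, hT, rfl⟩
    refine ⟨S ∩ T, hR.inter_mem S hS T hT, ?_⟩
    ext x; simp only [Set.mem_inter_iff]; tauto
  · rintro X ⟨S, hS, rfl⟩ hne
    set f := FrobR (Δ ∩ U) (S ∩ U) with hf
    have hsub : S ∩ U ⊆ Δ ∩ U := Set.inter_subset_inter (hR.subset_max S hS) le_rfl
    have hfinX : ((Δ ∩ U) \ (S ∩ U)).Finite := by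
      have := (natsg_inter (hR.sgrp S hS) hU).2.2
      exact this.subset (fun x hx => hx.2)
    have hne' : ((Δ ∩ U) \ (S ∩ U)).Nonempty := by
      rcases Set.exists_of_ssubset (hsub.ssubset_of_ne hne) with ⟨x, hx1, hx2⟩
      exact ⟨x, hx1, hx2⟩
    have hfmem : f ∈ (Δ ∩ U) \ (S ∩ U) := hne'.csSup_mem hfinX
    have hfmax : ∀ x ∈ (Δ ∩ U) \ (S ∩ U), x ≤ f :=
      fun x hx => le_csSup hfinX.bddAbove hx
    refine ⟨S ∪ {x ∈ Δ | f ≤ x}, chain_mem hR hS f, ?_⟩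
    ext x
    simp only [Set.mem_union, Set.mem_inter_iff, Set.mem_setOf_eq, Set.mem_singleton_iff]
    constructor
    · rintro (⟨hxS, hxU⟩ | rfl)
      · exact ⟨Or.inl hxS, hxU⟩
      · exact ⟨Or.inr ⟨hfmem.1.1, le_rfl⟩, hfmem.1.2⟩
    · rintro ⟨(hxS | ⟨hxΔ, hxge⟩), hxU⟩
      · exact Or.inl ⟨hxS, hxU⟩
      · by_cases hxX : x ∈ S ∩ U
        · exact Or.inl hxX
        · exact Or.inr (le_antisymm (hfmax x ⟨⟨hxΔ, hxU⟩, hxX⟩) hxge)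
end

section
/- Let 𝓡 be an R-variety, let A ⊆ Δ(𝓡), and let x ∈ 𝓡(A). Then x ∈ 𝓡({a ∈ A | a ≤ x}). -/
lemma chain_step_aux (R : Set (Set ℕ)) (Δ : Set ℕ) (hR : IsRVariety R Δ)
    (S : Set ℕ) (hS : S ∈ R) (n : ℕ)
    (h : S ∪ {y ∈ Δ | n + 1 ≤ y} ∈ R) :
    S ∪ {y ∈ Δ | n ≤ y} ∈ R := by
  by_cases hn : n ∈ Δ ∧ n ∉ S
  · set T := S ∪ {y ∈ Δ | n + 1 ≤ y} with hT
    have hnT : n ∉ T := by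
      rintro (h1 | h2)
      · exact hn.2 h1
      · exact absurd h2.2 (by omega)
    have hne : T ≠ Δ := fun hEq => hnT (hEq ▸ hn.1)
    have hfrob : FrobR Δ T = n := by
      have hmem : n ∈ Δ \ T := ⟨hn.1, hnT⟩
      have hbdd : ∀ y ∈ Δ \ T, y ≤ n := by
        rintro y ⟨hy1, hy2⟩
        by_contra hcon
        exact hy2 (Or.inr ⟨hy1, by omega⟩)
      refine le_antisymm (csSup_le ⟨n, hmem⟩ hbdd) (le_csSup ⟨n, hbdd⟩ hmem)
    have hstep := hR.step T h hne
    rw [hfrob] at hstep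
    have : S ∪ {y ∈ Δ | n ≤ y} = T ∪ {n} := by
      ext y
      constructor
      · rintro (h1 | ⟨h2, h3⟩)
        · exact Or.inl (Or.inl h1)
        · by_cases hyn : y = n
          · exact Or.inr hyn
          · exact Or.inl (Or.inr ⟨h2, by omega⟩)
      · rintro ((h1 | ⟨h2, h3⟩) | h4)
        · exact Or.inl h1
        · exact Or.inr ⟨h2, by omega⟩
        · simp only [Set.mem_singleton_iff] at h4
          subst h4
          exact Or.inr ⟨hn.1, le_refl _⟩
    rw [this]
    exact hstep
  · have : S ∪ {y ∈ Δ | n ≤ y} = S ∪ {y ∈ Δ | n + 1 ≤ y} := by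
      ext y
      constructor
      · rintro (h1 | ⟨h2, h3⟩)
        · exact Or.inl h1
        · by_cases hyn : y = n
          · subst hyn
            rcases not_and_or.mp hn with h' | h'
            · exact absurd h2 h'
            · exact Or.inl (not_not.mp h')
          · exact Or.inr ⟨h2, by omega⟩
      · rintro (h1 | ⟨h2, h3⟩)
        · exact Or.inl h1
        · exact Or.inr ⟨h2, by omega⟩
    rw [this]
    exact h

lemma chain_mem_aux_s9 (R : Set (Set ℕ)) (Δ : Set ℕ) (hR : IsRVariety R Δ)
    (S : Set ℕ) (hS : S ∈ R) (n : ℕ) :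
    S ∪ {y ∈ Δ | n ≤ y} ∈ R := by
  set K := sSup (Δ \ S) + 1 with hK
  have hfin : (Δ \ S).Finite :=
    Set.Finite.subset (hR.sgrp S hS).2.2 (fun y hy => hy.2)
  have hKbig : ∀ y ∈ Δ \ S, y < K := by
    intro y hy
    have := le_csSup hfin.bddAbove hy
    omega
  have hsup : ∀ m, K ≤ m → S ∪ {y ∈ Δ | m ≤ y} = S := by
    intro m hm
    ext y
    constructor
    · rintro (h1 | ⟨h2, h3⟩)
      · exact h1
      · by_contra hcon
        have := hKbig y ⟨h2, hcon⟩
        omega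
    · exact fun h => Or.inl h
  have hind : ∀ d : ℕ, S ∪ {y ∈ Δ | (K - d) ≤ y} ∈ R := by
    intro d
    induction d with
    | zero =>
      rw [Nat.sub_zero, hsup K le_rfl]
      exact hS
    | succ d ih =>
      by_cases hd : d < K
      · apply chain_step_aux R Δ hR S hS
        have : K - (d + 1) + 1 = K - d := by omega
        rw [this]
        exact ih
      · have : K - (d + 1) = K - d := by omega
        rw [this]
        exact ih
  by_cases hn : n < K
  · have : n = K - (K - n) := by omega
    rw [this]
    exact hind (K - n)
  · rw [hsup n (by omega)]
    exact hS

/-- If `x ∈ 𝓡(A)`, then `x ∈ 𝓡({a ∈ A | a ≤ x})`. -/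
theorem mem_fGen_le (R : Set (Set ℕ)) (Δ : Set ℕ)
    (hR : IsRVariety R Δ) (A : Set ℕ) (hA : A ⊆ Δ) (x : ℕ)
    (hx : x ∈ FGen R A) :
    x ∈ FGen R {a ∈ A | a ≤ x} := by
  intro M hM
  obtain ⟨⟨G, hGR, hGne, rfl⟩, hBM⟩ := hM
  -- Consider the family G' = {S ∪ {y ∈ Δ | x+1 ≤ y} : S ∈ G}
  have key : x ∈ ⋂₀ ((fun S => S ∪ {y ∈ Δ | x + 1 ≤ y}) '' G) := by
    apply hx
    refine ⟨⟨_, ?_, hGne.image _, rfl⟩, ?_⟩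
    · rintro _ ⟨T, hT, rfl⟩
      exact chain_mem_aux_s9 R Δ hR T (hGR hT) (x + 1)
    · intro a ha
      rintro _ ⟨T, hT, rfl⟩
      by_cases hax : a ≤ x
      · exact Or.inl (hBM ⟨ha, hax⟩ T hT)
      · exact Or.inr ⟨hA ha, by omega⟩
  intro S hS
  have hx' := key _ ⟨S, hS, rfl⟩
  rcases hx' with h | ⟨_, h2⟩
  · exact h
  · omega
end

section
/- Let 𝓥 be a variety, let T be a numerical semigroup, and let 𝓥_T = {S ∩ T | S ∈ 𝓥} (which is an R-variety with maximum T). If A ⊆ T, then 𝓥_T(A) = 𝓥(A) ∩ T. -/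
theorem univ_mem_aux (V : Set (Set ℕ)) (hV : IsVariety V) :
    ∀ n : ℕ, ∀ S ∈ V, Sᶜ.ncard ≤ n → Set.univ ∈ V := by
  intro n
  induction n with
  | zero =>
    intro S hS hle
    have hfin := (hV.sgrp S hS).2.2
    have h0 : Sᶜ.ncard = 0 := Nat.le_zero.mp hle
    have : Sᶜ = ∅ := by
      rcases Set.eq_empty_or_nonempty Sᶜ with h | h
      · exact h
      · exact absurd h0 ((Set.ncard_pos hfin).mpr h).ne'
    have : S = Set.univ := by
      rw [← Set.compl_empty, ← this, compl_compl]
    rwa [← this]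
  | succ n ih =>
    intro S hS hle
    have hfin := (hV.sgrp S hS).2.2
    by_cases h : S = Set.univ
    · rwa [← h]
    · have hne : Sᶜ.Nonempty := by
        rwa [Set.nonempty_compl]
      have hF : Frob S ∈ Sᶜ := hne.csSup_mem hfin
      have hstep := hV.step S hS h
      apply ih _ hstep
      have hcompl : (S ∪ {Frob S})ᶜ = Sᶜ \ {Frob S} := by
        rw [Set.compl_union]
        rfl
      rw [hcompl]
      have := Set.ncard_diff_singleton_lt_of_mem hF hfin
      omega

/-- If `A ⊆ T`, then `𝓥_T(A) = 𝓥(A) ∩ T`. -/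
theorem fGen_inter_eq (V : Set (Set ℕ)) (hV : IsVariety V)
    (T : Set ℕ) (hT : IsNumericalSemigroup T) (A : Set ℕ) (hA : A ⊆ T) :
    FGen {X | ∃ S ∈ V, X = S ∩ T} A = FGen V A ∩ T := by
  have huniv : Set.univ ∈ V := by
    obtain ⟨S, hS⟩ := hV.nonempty
    exact univ_mem_aux V hV Sᶜ.ncard S hS le_rfl
  set W : Set (Set ℕ) := {X | ∃ S ∈ V, X = S ∩ T} with hWdef
  set Gs : Set (Set ℕ) := {S | ∃ G ⊆ V, G.Nonempty ∧ A ⊆ ⋂₀ G ∧ S ∈ G} with hGsdef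
  have hGsV : Gs ⊆ V := by
    rintro S ⟨G, hGV, _, _, hSG⟩
    exact hGV hSG
  have hGsne : Gs.Nonempty := by
    refine ⟨Set.univ, {Set.univ}, ?_, ⟨Set.univ, rfl⟩, ?_, rfl⟩
    · simp [huniv]
    · simp
  have hIGs : ⋂₀ Gs = FGen V A := by
    ext x
    simp only [Set.mem_sInter, FGen, Set.mem_setOf_eq, hGsdef]
    constructor
    · rintro h M ⟨⟨G, hGV, hGne, rfl⟩, hAM⟩
      rw [Set.mem_sInter]
      intro X hXG
      exact h X ⟨G, hGV, hGne, hAM, hXG⟩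
    · rintro h S ⟨G, hGV, hGne, hAG, hSG⟩
      exact Set.mem_sInter.mp (h (⋂₀ G) ⟨⟨G, hGV, hGne, rfl⟩, hAG⟩) S hSG
  have hAgen : A ⊆ FGen V A := by
    intro a ha
    rw [FGen, Set.mem_sInter]
    rintro M ⟨_, hAM⟩
    exact hAM ha
  have key : ⋂₀ ((· ∩ T) '' Gs) = FGen V A ∩ T := by
    obtain ⟨S₀, hS₀⟩ := hGsne
    ext x
    rw [← hIGs]
    simp only [Set.mem_sInter, Set.mem_inter_iff]
    constructor
    · intro h
      refine ⟨fun S hS => (h _ ⟨S, hS, rfl⟩).1, (h _ ⟨S₀, hS₀, rfl⟩).2⟩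
    · rintro ⟨h1, h2⟩ X ⟨S, hS, rfl⟩
      exact ⟨h1 S hS, h2⟩
  apply subset_antisymm
  · -- FGen W A ⊆ FGen V A ∩ T : the RHS is a W-monoid containing A
    apply Set.sInter_subset_of_mem
    refine ⟨⟨(· ∩ T) '' Gs, ?_, hGsne.image _, key.symm⟩, ?_⟩
    · rintro X ⟨S, hS, rfl⟩
      exact ⟨S, hGsV hS, rfl⟩
    · exact Set.subset_inter hAgen hA
  · rintro x ⟨hx, hxT⟩
    rw [FGen, Set.mem_sInter]
    rintro N ⟨⟨G, hGW, hGne, rfl⟩, hAN⟩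
    rw [Set.mem_sInter]
    intro X hXG
    obtain ⟨S, hSV, rfl⟩ := hGW hXG
    have hAS : A ⊆ S := fun a ha => ((Set.sInter_subset_of_mem hXG) (hAN ha)).1
    have hxS : x ∈ S := by
      rw [FGen, Set.mem_sInter] at hx
      have := hx S ⟨⟨{S}, by simpa using hSV, ⟨S, rfl⟩, by simp⟩, by simpa using hAS⟩
      exact this
    exact ⟨hxS, hxT⟩
end

section
/- Let 𝓥 be a variety, let T be a numerical semigroup, let 𝓥_T = {S ∩ T | S ∈ 𝓥}, and let A ⊆ T. Then A is the minimal 𝓥_T-system of generators of 𝓥_T(A) if and only if A is the minimal 𝓥-system of generators of 𝓥(A). -/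
/-! Since `ℕ` belongs to every variety `𝓥`, the `𝓥_T`-monoid generated by `B ⊆ T` is `𝓥(B) ∩ T`.
For `B ⊆ A ⊆ T`, the equality `𝓥(B) ∩ T = 𝓥(A) ∩ T` puts `A` inside `𝓥(B)`, hence forces
`𝓥(B) = 𝓥(A)`; so the proper subsets of `A` that generate the same monoid are the same for
`𝓥` and for `𝓥_T`. -/

open Set

lemma IsVariety.univ_mem {V : Set (Set ℕ)} (hV : IsVariety V) : univ ∈ V := by
  obtain ⟨S, hS⟩ := hV.nonempty
  induction hn : Sᶜ.ncard generalizing S with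
  | zero =>
    have hfin : Sᶜ.Finite := (hV.sgrp S hS).2.2
    rwa [← compl_empty_iff.mp ((ncard_eq_zero hfin).mp hn)]
  | succ n ih =>
    have hfin : Sᶜ.Finite := (hV.sgrp S hS).2.2
    have hSu : S ≠ univ := fun h => by simp [h] at hn
    have hFrob : Frob S ∈ Sᶜ := (nonempty_compl.mpr hSu).csSup_mem hfin
    refine ih _ (hV.step S hS hSu) ?_
    rw [compl_union, ← sdiff_eq, ncard_sdiff_singleton_of_mem hFrob, hn, Nat.add_sub_cancel]

section FGen

variable (F : Set (Set ℕ))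

lemma FGen_eq_sInter (B : Set ℕ) : FGen F B = ⋂₀ {S ∈ F | B ⊆ S} := by
  apply subset_antisymm
  · intro x hx S hS
    have hSmon : IsFMonoid F S :=
      ⟨{S}, singleton_subset_iff.mpr hS.1, singleton_nonempty S, (sInter_singleton S).symm⟩
    exact hx S ⟨hSmon, hS.2⟩
  · rintro x hx M ⟨⟨G, hGF, -, rfl⟩, hBM⟩ S hS
    exact hx S ⟨hGF hS, hBM.trans (sInter_subset_of_mem hS)⟩

lemma subset_FGen (A : Set ℕ) : A ⊆ FGen F A := by
  rw [FGen_eq_sInter]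
  exact subset_sInter fun _ hS => hS.2

lemma FGen_subset_FGen_of_subset_FGen {A B : Set ℕ} (h : A ⊆ FGen F B) :
    FGen F A ⊆ FGen F B := by
  rw [FGen_eq_sInter F B] at h ⊢
  rw [FGen_eq_sInter F A]
  exact subset_sInter fun S hS => sInter_subset_of_mem ⟨hS.1, h.trans (sInter_subset_of_mem hS)⟩

lemma FGen_mono {A B : Set ℕ} (h : B ⊆ A) : FGen F B ⊆ FGen F A :=
  FGen_subset_FGen_of_subset_FGen F (h.trans (subset_FGen F A))

lemma isMinGenSystem_FGen_iff (A : Set ℕ) :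
    IsMinGenSystem F A (FGen F A) ↔ ∀ B ⊂ A, FGen F B ≠ FGen F A :=
  and_iff_right rfl

variable {F} (hF : univ ∈ F) {T : Set ℕ}
include hF

lemma FGen_inter_eq {B : Set ℕ} (hB : B ⊆ T) :
    FGen {X | ∃ S ∈ F, X = S ∩ T} B = FGen F B ∩ T := by
  have hT : T ∈ {X | ∃ S ∈ F, X = S ∩ T} := ⟨univ, hF, (univ_inter T).symm⟩
  rw [FGen_eq_sInter, FGen_eq_sInter]
  apply subset_antisymm
  · intro x hx
    refine ⟨fun S hS => (hx (S ∩ T) ⟨⟨S, hS.1, rfl⟩, subset_inter hS.2 hB⟩).1, hx T ⟨hT, hB⟩⟩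
  · rintro x ⟨hxF, hxT⟩ X ⟨⟨S, hS, rfl⟩, hBX⟩
    exact ⟨hxF S ⟨hS, hBX.trans inter_subset_left⟩, hxT⟩

lemma FGen_inter_eq_iff {A B : Set ℕ} (hA : A ⊆ T) (hBA : B ⊆ A) :
    FGen {X | ∃ S ∈ F, X = S ∩ T} B = FGen {X | ∃ S ∈ F, X = S ∩ T} A ↔
      FGen F B = FGen F A := by
  rw [FGen_inter_eq hF (hBA.trans hA), FGen_inter_eq hF hA]
  refine ⟨fun h => ?_, fun h => h ▸ rfl⟩
  have hAB : A ⊆ FGen F B := fun a ha =>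
    (h ▸ mem_inter (subset_FGen F A ha) (hA ha) : a ∈ FGen F B ∩ T).1
  exact (FGen_mono F hBA).antisymm (FGen_subset_FGen_of_subset_FGen F hAB)

end FGen

theorem isMinGenSystem_inter_iff_general (V : Set (Set ℕ)) (hV : IsVariety V)
    (T : Set ℕ) (A : Set ℕ) (hA : A ⊆ T) :
    IsMinGenSystem {X | ∃ S ∈ V, X = S ∩ T} A
        (FGen {X | ∃ S ∈ V, X = S ∩ T} A) ↔
      IsMinGenSystem V A (FGen V A) := by
  rw [isMinGenSystem_FGen_iff, isMinGenSystem_FGen_iff]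
  exact forall₂_congr fun B hB => not_congr (FGen_inter_eq_iff hV.univ_mem hA hB.subset)

/-- For `A ⊆ T`, `A` is the minimal `𝓥_T`-system of generators
of `𝓥_T(A)` iff `A` is the minimal `𝓥`-system of generators of `𝓥(A)`. -/
theorem isMinGenSystem_inter_iff (V : Set (Set ℕ)) (hV : IsVariety V)
    (T : Set ℕ) (hT : IsNumericalSemigroup T) (A : Set ℕ) (hA : A ⊆ T) :
    IsMinGenSystem {X | ∃ S ∈ V, X = S ∩ T} A
        (FGen {X | ∃ S ∈ V, X = S ∩ T} A) ↔
      IsMinGenSystem V A (FGen V A) :=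
  isMinGenSystem_inter_iff_general V hV T A hA
end

section
/- Let 𝓡 be an R-variety and let S, T ∈ 𝓡. Then T is a child of S in the tree G(𝓡) — that is, T ≠ Δ(𝓡) and S = T ∪ {F_{Δ(𝓡)}(T)} — if and only if there exists an element x of the minimal 𝓡-system of generators of S such that T = S \ {x} and either S = Δ(𝓡) or x > F_{Δ(𝓡)}(S). -/
/-- `T` is a child of `S` in the tree `G(𝓡)` iff `T = S \ {x}`
for some element `x` of the minimal `𝓡`-system of generators of `S` with
`x > F_{Δ(𝓡)}(S)` (or `S = Δ(𝓡)`). -/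
theorem child_iff (R : Set (Set ℕ)) (Δ : Set ℕ) (hR : IsRVariety R Δ)
    (S : Set ℕ) (hS : S ∈ R) (T : Set ℕ) (hT : T ∈ R)
    (A : Set ℕ) (hA : A ⊆ Δ) (hmin : IsMinGenSystem R A S) :
    (T ≠ Δ ∧ S = T ∪ {FrobR Δ T}) ↔
      ∃ x ∈ A, T = S \ {x} ∧ (S = Δ ∨ FrobR Δ S < x) := by
  obtain ⟨hgen, -⟩ := hmin
  have hAS : A ⊆ S := by
    rw [← hgen]
    intro x hx M hM
    exact hM.2 hx
  have hSΔsub : S ⊆ Δ := hR.subset_max S hS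
  have hfinS : (Δ \ S).Finite := (hR.sgrp S hS).2.2.subset (fun y hy => hy.2)
  constructor
  · rintro ⟨hTΔ, hST⟩
    set f := FrobR Δ T with hfdef
    have hTΔsub : T ⊆ Δ := hR.subset_max T hT
    have hfinT : (Δ \ T).Finite := (hR.sgrp T hT).2.2.subset (fun y hy => hy.2)
    have hneT : (Δ \ T).Nonempty := by
      rw [Set.diff_nonempty]
      intro h
      exact hTΔ (Set.Subset.antisymm hTΔsub h)
    have hf : f ∈ Δ \ T := hneT.csSup_mem hfinT
    have hfS : f ∈ S := hST ▸ Or.inr rfl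
    have hTS : T = S \ {f} := by
      rw [hST]
      ext y
      simp only [Set.mem_diff, Set.mem_union, Set.mem_singleton_iff]
      constructor
      · intro hy
        exact ⟨Or.inl hy, fun h => hf.2 (h ▸ hy)⟩
      · rintro ⟨hy | rfl, hne⟩
        · exact hy
        · exact absurd rfl hne
    have hfA : f ∈ A := by
      by_contra hfA
      have hAT : A ⊆ T := by
        intro y hy
        rw [hTS]
        exact ⟨hAS hy, fun h => hfA (h ▸ hy)⟩
      have hmono : IsFMonoid R T := ⟨{T}, by simpa using hT, ⟨T, rfl⟩,
        (Set.sInter_singleton T).symm⟩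
      have hsub : FGen R A ⊆ T := Set.sInter_subset_of_mem ⟨hmono, hAT⟩
      rw [hgen] at hsub
      exact hf.2 (hsub hfS)
    refine ⟨f, hfA, hTS, ?_⟩
    by_cases hSΔ : S = Δ
    · exact Or.inl hSΔ
    · right
      have hneS : (Δ \ S).Nonempty := by
        rw [Set.diff_nonempty]
        intro h
        exact hSΔ (Set.Subset.antisymm hSΔsub h)
      have hFS : FrobR Δ S ∈ Δ \ S := hneS.csSup_mem hfinS
      have hle : FrobR Δ S ≤ f := by
        apply le_csSup hfinT.bddAbove
        refine ⟨hFS.1, fun hmem => hFS.2 ?_⟩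
        have h2 : FrobR Δ S ∈ T ∪ {f} := Or.inl hmem
        rwa [← hST] at h2
      exact lt_of_le_of_ne hle (fun h => hFS.2 (h ▸ hfS))
  · rintro ⟨x, hxA, hTdef, hcase⟩
    subst hTdef
    have hxΔ : x ∈ Δ := hA hxA
    have hxS : x ∈ S := hAS hxA
    have hTΔ : S \ {x} ≠ Δ := by
      intro h
      have : x ∈ S \ {x} := h ▸ hxΔ
      exact this.2 rfl
    have hdiff : Δ \ (S \ {x}) = (Δ \ S) ∪ {x} := by
      ext y
      simp only [Set.mem_diff, Set.mem_union, Set.mem_singleton_iff, not_and, not_not]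
      constructor
      · rintro ⟨hyΔ, h⟩
        by_cases hy : y = x
        · exact Or.inr hy
        · exact Or.inl ⟨hyΔ, fun hyS => hy (h hyS)⟩
      · rintro (⟨hyΔ, hyS⟩ | rfl)
        · exact ⟨hyΔ, fun h => absurd h hyS⟩
        · exact ⟨hxΔ, fun _ => rfl⟩
    have hxval : FrobR Δ (S \ {x}) = x := by
      rw [show FrobR Δ (S \ {x}) = sSup (Δ \ (S \ {x})) from rfl, hdiff]
      rcases hcase with hSΔ | hFlt
      · have : Δ \ S = ∅ := by rw [hSΔ, Set.diff_self]
        rw [this, Set.empty_union, csSup_singleton]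
      · have hbdd : BddAbove ((Δ \ S) ∪ {x}) :=
          (hfinS.union (Set.finite_singleton x)).bddAbove
        apply le_antisymm
        · apply csSup_le ⟨x, Or.inr rfl⟩
          rintro y (hy | rfl)
          · exact le_of_lt (lt_of_le_of_lt (le_csSup hfinS.bddAbove hy) hFlt)
          · exact le_refl _
        · exact le_csSup hbdd (Or.inr rfl)
    refine ⟨hTΔ, ?_⟩
    rw [hxval]
    ext y
    simp only [Set.mem_union, Set.mem_diff, Set.mem_singleton_iff]
    constructor
    · intro hy
      by_cases h : y = x
      · exact Or.inr h
      · exact Or.inl ⟨hy, h⟩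
    · rintro (⟨hy, -⟩ | rfl)
      · exact hy
      · exact hxS
end

section
/- Let 𝓡 be an R-variety and let T ∈ 𝓡. Then the set of descendants of T, namely 𝓓(T) = {S ∈ 𝓡 | there exists n ∈ ℕ such that T = S ∪ {x ∈ Δ(𝓡) | x ≥ n}}, is an R-variety, and its maximum element with respect to inclusion is T. -/
/-- The set of descendants of `T ∈ 𝓡` in the tree `G(𝓡)` is an
R-variety with maximum `T`. -/
theorem descendants_isRVariety (R : Set (Set ℕ)) (Δ : Set ℕ)
    (hR : IsRVariety R Δ) (T : Set ℕ) (hT : T ∈ R) :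
    IsRVariety {S | S ∈ R ∧ ∃ n : ℕ, T = S ∪ {x ∈ Δ | n ≤ x}} T := by
  obtain ⟨hsgrp, hmaxmem, hsub, hinter, hstep⟩ := hR
  have hTsg := hsgrp T hT
  have hTΔ : T ⊆ Δ := hsub T hT
  -- auxiliary: intersection witness (min on the left)
  have aux : ∀ (S S' : Set ℕ) (n m : ℕ), m ≤ n → T = S ∪ {x ∈ Δ | n ≤ x} →
      T = S' ∪ {x ∈ Δ | m ≤ x} → T = (S ∩ S') ∪ {x ∈ Δ | m ≤ x} := by
    intro S S' n m hmn hn hm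
    ext t
    constructor
    · intro ht
      by_cases htm : t ∈ Δ ∧ m ≤ t
      · exact Or.inr ⟨htm.1, htm.2⟩
      · have h1 : t ∈ S := by
          have := hn ▸ ht
          rcases this with h | ⟨hΔ, hnt⟩
          · exact h
          · exact absurd ⟨hΔ, le_trans hmn hnt⟩ htm
        have h2 : t ∈ S' := by
          have := hm ▸ ht
          rcases this with h | ⟨hΔ, hmt⟩
          · exact h
          · exact absurd ⟨hΔ, hmt⟩ htm
        exact Or.inl ⟨h1, h2⟩
    · rintro (⟨h1, _⟩ | h)
      · rw [hn]; exact Or.inl h1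
      · rw [hm]; exact Or.inr h
  constructor
  · intro S hS
    exact hsgrp S hS.1
  · refine ⟨hT, sSup Tᶜ + 1, ?_⟩
    apply subset_antisymm Set.subset_union_left
    rintro x (hx | ⟨_, hxn⟩)
    · exact hx
    · by_contra hxT
      have := le_csSup hTsg.2.2.bddAbove (Set.mem_compl hxT)
      omega
  · rintro S ⟨_, n, hn⟩
    rw [hn]; exact Set.subset_union_left
  · rintro S ⟨hSR, n, hn⟩ S' ⟨hS'R, m, hm⟩
    refine ⟨hinter S hSR S' hS'R, ?_⟩
    rcases le_total m n with h | h
    · exact ⟨m, aux S S' n m h hn hm⟩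
    · refine ⟨n, ?_⟩
      rw [Set.inter_comm]
      exact aux S' S m n h hm hn
  · rintro S ⟨hSR, n, hn⟩ hST
    have hSsg := hsgrp S hSR
    have hST' : S ⊆ T := by rw [hn]; exact Set.subset_union_left
    have hSΔ : S ⊆ Δ := hsub S hSR
    have hSneΔ : S ≠ Δ := by
      intro h
      exact hST (subset_antisymm hST' (h ▸ hTΔ))
    have hbddΔ : BddAbove (Δ \ S) :=
      (hSsg.2.2.subset (fun x hx => hx.2)).bddAbove
    have hbddT : BddAbove (T \ S) :=
      (hSsg.2.2.subset (fun x hx => hx.2)).bddAbove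
    have hne : (T \ S).Nonempty := by
      rcases Set.exists_of_ssubset (ssubset_of_subset_of_ne hST' hST) with ⟨x, hx1, hx2⟩
      exact ⟨x, hx1, hx2⟩
    have hfmem : sSup (T \ S) ∈ T \ S := Nat.sSup_mem hne hbddT
    -- every element of T \ S is ≥ n
    have hTS_ge : ∀ x ∈ T \ S, n ≤ x := by
      rintro x ⟨hxT, hxS⟩
      rcases hn ▸ hxT with h | ⟨_, h⟩
      · exact absurd h hxS
      · exact h
    have hfrob_eq : FrobR Δ S = FrobR T S := by
      unfold FrobR
      apply le_antisymm
      · have hneΔ : (Δ \ S).Nonempty := hne.mono (Set.diff_subset_diff_left hTΔ)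
        have hdmem : sSup (Δ \ S) ∈ Δ \ S := Nat.sSup_mem hneΔ hbddΔ
        by_cases hdT : sSup (Δ \ S) ∈ T
        · exact le_csSup hbddT ⟨hdT, hdmem.2⟩
        · exfalso
          have hdlt : sSup (Δ \ S) < n := by
            by_contra h
            push_neg at h
            exact hdT (hn ▸ Or.inr ⟨hdmem.1, h⟩)
          have h1 : n ≤ sSup (T \ S) := hTS_ge _ hfmem
          have h2 : sSup (T \ S) ≤ sSup (Δ \ S) :=
            le_csSup hbddΔ ⟨hTΔ hfmem.1, hfmem.2⟩
          omega
      · exact csSup_le_csSup hbddΔ hne (Set.diff_subset_diff_left hTΔ)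
    have hmem : S ∪ {FrobR T S} ∈ R := hfrob_eq ▸ hstep S hSR hSneΔ
    refine ⟨hmem, n, ?_⟩
    apply subset_antisymm
    · intro t ht
      rcases hn ▸ ht with h | h
      · exact Or.inl (Or.inl h)
      · exact Or.inr h
    · rintro t ((h | h) | h)
      · exact hST' h
      · rw [Set.mem_singleton_iff] at h
        rw [h]
        exact hfmem.1
      · rw [hn]; exact Or.inr h
end

section
/- Let 𝓕 be a family of numerical semigroups and let Δ be a numerical semigroup such that S ⊆ Δ for all S ∈ 𝓕. Then there exists the smallest R-variety which contains 𝓕 and has maximum Δ; that is, there exists an R-variety 𝓡 with 𝓕 ⊆ 𝓡 and Δ(𝓡) = Δ such that 𝓡 ⊆ 𝓡' for every R-variety 𝓡' with 𝓕 ⊆ 𝓡' and Δ(𝓡') = Δ. -/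
lemma step_numerical {Δ S : Set ℕ} (hΔ : IsNumericalSemigroup Δ)
    (hS : IsNumericalSemigroup S) (hsub : S ⊆ Δ) (hne : S ≠ Δ) :
    IsNumericalSemigroup (S ∪ {FrobR Δ S}) ∧ S ∪ {FrobR Δ S} ⊆ Δ := by
  obtain ⟨h0, hadd, hfin⟩ := hS
  have hDfin : (Δ \ S).Finite := hfin.subset (fun x hx => hx.2)
  have hDne : (Δ \ S).Nonempty := by
    rcases Set.exists_of_ssubset (hsub.ssubset_of_ne hne) with ⟨x, hx1, hx2⟩
    exact ⟨x, hx1, hx2⟩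
  have hfmem : FrobR Δ S ∈ Δ \ S := Set.Nonempty.csSup_mem hDne hDfin
  set f := FrobR Δ S with hf
  have hfΔ : f ∈ Δ := hfmem.1
  have hfS : f ∉ S := hfmem.2
  have hfpos : 0 < f := by
    rcases Nat.eq_zero_or_pos f with h | h
    · exact absurd (h ▸ h0) hfS
    · exact h
  have hbig : ∀ x ∈ Δ, f < x → x ∈ S := by
    intro x hx hlt
    by_contra hxS
    exact absurd (le_csSup hDfin.bddAbove ⟨hx, hxS⟩) (not_le.mpr hlt)
  have hsub' : S ∪ {f} ⊆ Δ := by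
    intro x hx
    rcases hx with hx | hx
    · exact hsub hx
    · exact hx ▸ hfΔ
  refine ⟨⟨Or.inl h0, ?_, ?_⟩, hsub'⟩
  · intro a ha b hb
    rcases ha with ha | ha <;> rcases hb with hb | hb
    · exact Or.inl (hadd a ha b hb)
    · rcases Nat.eq_zero_or_pos a with h | h
      · subst h; rw [zero_add]; exact Or.inr hb
      · subst hb
        exact Or.inl (hbig _ (hΔ.2.1 a (hsub ha) f hfΔ) (by omega))
    · rcases Nat.eq_zero_or_pos b with h | h
      · subst h; rw [add_zero]; exact Or.inr ha
      · subst ha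
        exact Or.inl (hbig _ (hΔ.2.1 f hfΔ b (hsub hb)) (by omega))
    · subst ha; subst hb
      exact Or.inl (hbig _ (hΔ.2.1 f hfΔ f hfΔ) (by omega))
  · exact hfin.subset (by intro x hx; simp only [Set.mem_compl_iff, Set.mem_union] at hx ⊢; tauto)

lemma base_rVariety {Δ : Set ℕ} (hΔ : IsNumericalSemigroup Δ) :
    IsRVariety {S | IsNumericalSemigroup S ∧ S ⊆ Δ} Δ := by
  constructor
  · exact fun S hS => hS.1
  · exact ⟨hΔ, subset_rfl⟩
  · exact fun S hS => hS.2
  · rintro S ⟨⟨h0S, haddS, hfinS⟩, hSΔ⟩ T ⟨⟨h0T, haddT, hfinT⟩, hTΔ⟩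
    refine ⟨⟨⟨h0S, h0T⟩, ?_, ?_⟩, fun x hx => hSΔ hx.1⟩
    · exact fun a ha b hb => ⟨haddS a ha.1 b hb.1, haddT a ha.2 b hb.2⟩
    · refine (hfinS.union hfinT).subset ?_
      intro x hx
      simp only [Set.mem_compl_iff, Set.mem_inter_iff, Set.mem_union] at hx ⊢
      tauto
  · rintro S ⟨hS, hsub⟩ hne
    exact step_numerical hΔ hS hsub hne

/-- There exists the smallest R-variety containing `𝓕` with
maximum `Δ`. -/
theorem exists_smallest_rVariety (F : Set (Set ℕ)) (Δ : Set ℕ)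
    (hΔ : IsNumericalSemigroup Δ)
    (hF : ∀ S ∈ F, IsNumericalSemigroup S ∧ S ⊆ Δ) :
    ∃ R : Set (Set ℕ), IsRVariety R Δ ∧ F ⊆ R ∧
      ∀ R' : Set (Set ℕ), IsRVariety R' Δ → F ⊆ R' → R ⊆ R' := by
  refine ⟨{S | ∀ R' : Set (Set ℕ), IsRVariety R' Δ → F ⊆ R' → S ∈ R'}, ?_, ?_, ?_⟩
  · have hF0 : F ⊆ {S | IsNumericalSemigroup S ∧ S ⊆ Δ} := fun S hS => hF S hS
    constructor
    · intro S hS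
      exact (hS _ (base_rVariety hΔ) hF0).1
    · exact fun R' hR' _ => hR'.max_mem
    · intro S hS
      exact (hS _ (base_rVariety hΔ) hF0).2
    · intro S hS T hT R' hR' hFR'
      exact hR'.inter_mem S (hS R' hR' hFR') T (hT R' hR' hFR')
    · intro S hS hne R' hR' hFR'
      exact hR'.step S (hS R' hR' hFR') hne
  · exact fun S hS R' _ hFR' => hFR' hS
  · exact fun R' hR' hFR' S hS => hS R' hR' hFR'
end

section
/- Let 𝓕 be a nonempty family of numerical semigroups and let Δ be a numerical semigroup such that S ⊆ Δ for all S ∈ 𝓕. Then 𝓡(𝓕, Δ), the smallest R-variety containing 𝓕 with maximum Δ, is equal to the set of all intersections of finitely many (at least one) elements of C(𝓕, Δ). -/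
/-- If the complement of `S` is finite, large tails add nothing. -/
lemma tail_large {S : Set ℕ} (hfin : Sᶜ.Finite) (Δ : Set ℕ) :
    ∃ N : ℕ, S ∪ {x ∈ Δ | N ≤ x} = S := by
  obtain ⟨N, hN⟩ := hfin.bddAbove
  refine ⟨N + 1, ?_⟩
  ext x
  simp only [Set.mem_union, Set.mem_setOf_eq]
  constructor
  · rintro (h | ⟨hxΔ, hx⟩)
    · exact h
    · by_contra hxS
      have := hN hxS
      omega
  · exact Or.inl

lemma chain_mem_of_mem {R : Set (Set ℕ)} {Δ : Set ℕ} (hR : IsRVariety R Δ)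
    {S : Set ℕ} (hSR : S ∈ R) (n : ℕ) : S ∪ {x ∈ Δ | n ≤ x} ∈ R := by
  have hfin : Sᶜ.Finite := (hR.sgrp S hSR).2.2
  obtain ⟨N, hNbig⟩ : ∃ N, ∀ x, x ∉ S → x < N := by
    obtain ⟨N, hN⟩ := hfin.bddAbove
    exact ⟨N + 1, fun x hx => Nat.lt_succ_of_le (hN hx)⟩
  have key : ∀ k : ℕ, S ∪ {x ∈ Δ | (N - k) ≤ x} ∈ R := by
    intro k
    induction k with
    | zero =>
      have heq : S ∪ {x ∈ Δ | (N - 0) ≤ x} = S := by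
        ext x
        simp only [Set.mem_union, Set.mem_setOf_eq]
        constructor
        · rintro (h | ⟨hxΔ, hx⟩)
          · exact h
          · by_contra hxS
            have := hNbig x hxS
            omega
        · exact Or.inl
      rw [heq]; exact hSR
    | succ k ih =>
      by_cases hk : N ≤ k
      · have heq : N - (k + 1) = N - k := by omega
        rw [heq]; exact ih
      · set m := N - (k + 1) with hm
        have hmk : N - k = m + 1 := by omega
        rw [hmk] at ih
        by_cases hmem : m ∈ Δ ∧ m ∉ S
        · have hne : S ∪ {x ∈ Δ | m + 1 ≤ x} ≠ Δ := by
            intro h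
            have hmm : m ∈ S ∪ {x ∈ Δ | m + 1 ≤ x} := by rw [h]; exact hmem.1
            rcases hmm with h' | ⟨_, h'⟩
            · exact hmem.2 h'
            · omega
          have hstep := hR.step _ ih hne
          have hfr : FrobR Δ (S ∪ {x ∈ Δ | m + 1 ≤ x}) = m := by
            unfold FrobR
            have hsub : Δ \ (S ∪ {x ∈ Δ | m + 1 ≤ x}) ⊆ Sᶜ := by
              rintro x ⟨hxΔ, hx⟩ hxS
              exact hx (Or.inl hxS)
            have hfin2 : (Δ \ (S ∪ {x ∈ Δ | m + 1 ≤ x})).Finite := hfin.subset hsub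
            have hmm : m ∈ Δ \ (S ∪ {x ∈ Δ | m + 1 ≤ x}) := by
              refine ⟨hmem.1, ?_⟩
              rintro (h' | ⟨_, h'⟩)
              · exact hmem.2 h'
              · omega
            apply le_antisymm
            · apply csSup_le ⟨m, hmm⟩
              rintro x ⟨hxΔ, hx⟩
              by_contra hlt
              push_neg at hlt
              exact hx (Or.inr ⟨hxΔ, by omega⟩)
            · exact le_csSup hfin2.bddAbove hmm
          rw [hfr] at hstep
          have heq : S ∪ {x ∈ Δ | m + 1 ≤ x} ∪ {m} = S ∪ {x ∈ Δ | m ≤ x} := by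
            ext x
            simp only [Set.union_assoc, Set.mem_union, Set.mem_setOf_eq,
              Set.mem_singleton_iff]
            constructor
            · rintro (h | ⟨h1, h2⟩ | rfl)
              · exact Or.inl h
              · exact Or.inr ⟨h1, by omega⟩
              · exact Or.inr ⟨hmem.1, le_refl m⟩
            · rintro (h | ⟨h1, h2⟩)
              · exact Or.inl h
              · rcases Nat.eq_or_lt_of_le h2 with h3 | h3
                · exact Or.inr (Or.inr h3.symm)
                · exact Or.inr (Or.inl ⟨h1, h3⟩)
          rw [heq] at hstep
          exact hstep
        · have heq : S ∪ {x ∈ Δ | m ≤ x} = S ∪ {x ∈ Δ | m + 1 ≤ x} := by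
            ext x
            simp only [Set.mem_union, Set.mem_setOf_eq]
            constructor
            · rintro (h | ⟨h1, h2⟩)
              · exact Or.inl h
              · rcases Nat.lt_or_ge x (m + 1) with hx | hx
                · have hxm : x = m := by omega
                  subst hxm
                  push_neg at hmem
                  exact Or.inl (hmem h1)
                · exact Or.inr ⟨h1, hx⟩
            · rintro (h | ⟨h1, h2⟩)
              · exact Or.inl h
              · exact Or.inr ⟨h1, by omega⟩
          rw [heq]; exact ih
  rcases Nat.lt_or_ge n N with h | h
  · have h2 := key (N - n)
    have hn : N - (N - n) = n := by omega
    rwa [hn] at h2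
  · have heq : S ∪ {x ∈ Δ | n ≤ x} = S := by
      ext x
      simp only [Set.mem_union, Set.mem_setOf_eq]
      constructor
      · rintro (h' | ⟨hxΔ, hx⟩)
        · exact h'
        · by_contra hxS
          have := hNbig x hxS
          omega
      · exact Or.inl
    rw [heq]; exact hSR

lemma sInter_finset_mem {R : Set (Set ℕ)} {Δ : Set ℕ} (hR : IsRVariety R Δ)
    (G : Finset (Set ℕ)) (hGne : G.Nonempty) (hG : ∀ X ∈ G, X ∈ R) :
    ⋂₀ (↑G : Set (Set ℕ)) ∈ R := by
  classical
  induction G using Finset.induction_on with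
  | empty => exact absurd hGne (by simp)
  | @insert a s ha ih =>
    rcases s.eq_empty_or_nonempty with rfl | hs
    · simpa using hG a (by simp)
    · have h1 : a ∈ R := hG a (by simp)
      have h2 : ⋂₀ (↑s : Set (Set ℕ)) ∈ R :=
        ih hs (fun X hX => hG X (Finset.mem_insert_of_mem hX))
      rw [Finset.coe_insert, Set.sInter_insert]
      exact hR.inter_mem _ h1 _ h2

lemma chain_elem_props {S Δ : Set ℕ} (hS : IsNumericalSemigroup S)
    (hΔ : IsNumericalSemigroup Δ) (hSΔ : S ⊆ Δ) {C : Set ℕ}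
    (hC : C ∈ RestrictedChain S Δ) : IsNumericalSemigroup C ∧ C ⊆ Δ := by
  obtain ⟨n, rfl⟩ := hC
  constructor
  · refine ⟨Or.inl hS.1, ?_, ?_⟩
    · rintro a (ha | ⟨haΔ, han⟩) b (hb | ⟨hbΔ, hbn⟩)
      · exact Or.inl (hS.2.1 a ha b hb)
      · exact Or.inr ⟨hΔ.2.1 a (hSΔ ha) b hbΔ, by omega⟩
      · exact Or.inr ⟨hΔ.2.1 a haΔ b (hSΔ hb), by omega⟩
      · exact Or.inr ⟨hΔ.2.1 a haΔ b hbΔ, by omega⟩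
    · refine hS.2.2.subset ?_
      intro x hx hxS
      exact hx (Or.inl hxS)
  · rintro x (hx | ⟨hx, _⟩)
    · exact hSΔ hx
    · exact hx

lemma chain_tail_closure {S Δ : Set ℕ} {C : Set ℕ}
    (hC : C ∈ RestrictedChain S Δ) (k : ℕ) :
    C ∪ {x ∈ Δ | k ≤ x} ∈ RestrictedChain S Δ := by
  obtain ⟨n, rfl⟩ := hC
  refine ⟨min n k, ?_⟩
  ext x
  simp only [Set.union_assoc, Set.mem_union, Set.mem_setOf_eq]
  constructor
  · rintro (h | ⟨h1, h2⟩ | ⟨h1, h2⟩)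
    · exact Or.inl h
    · exact Or.inr ⟨h1, by omega⟩
    · exact Or.inr ⟨h1, by omega⟩
  · rintro (h | ⟨h1, h2⟩)
    · exact Or.inl h
    · rcases le_or_gt n x with h3 | h3
      · exact Or.inr (Or.inl ⟨h1, h3⟩)
      · exact Or.inr (Or.inr ⟨h1, by omega⟩)


/-- The smallest R-variety containing `𝓕` with maximum `Δ` is
the set of all nonempty finite intersections of elements of `C(𝓕, Δ)`. -/
theorem smallest_rVariety_eq_finite_inters (F : Set (Set ℕ))
    (hne : F.Nonempty) (Δ : Set ℕ) (hΔ : IsNumericalSemigroup Δ)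
    (hF : ∀ S ∈ F, IsNumericalSemigroup S ∧ S ⊆ Δ)
    (R : Set (Set ℕ)) (hR : IsRVariety R Δ) (hFR : F ⊆ R)
    (hsmall : ∀ R' : Set (Set ℕ), IsRVariety R' Δ → F ⊆ R' → R ⊆ R') :
    R = {X | ∃ G : Finset (Set ℕ), G.Nonempty ∧
          (↑G : Set (Set ℕ)) ⊆ (⋃ S ∈ F, RestrictedChain S Δ) ∧
          X = ⋂₀ (↑G : Set (Set ℕ))} := by
  classical
  set 𝓒 : Set (Set ℕ) := ⋃ S ∈ F, RestrictedChain S Δ with h𝓒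
  set RHS : Set (Set ℕ) := {X | ∃ G : Finset (Set ℕ), G.Nonempty ∧
          (↑G : Set (Set ℕ)) ⊆ 𝓒 ∧ X = ⋂₀ (↑G : Set (Set ℕ))} with hRHS
  -- properties of chain elements
  have hCprops : ∀ C ∈ 𝓒, IsNumericalSemigroup C ∧ C ⊆ Δ := by
    intro C hC
    rw [h𝓒, Set.mem_iUnion₂] at hC
    obtain ⟨S, hSF, hC⟩ := hC
    exact chain_elem_props (hF S hSF).1 hΔ (hF S hSF).2 hC
  have hCtail : ∀ C ∈ 𝓒, ∀ k : ℕ, C ∪ {x ∈ Δ | k ≤ x} ∈ 𝓒 := by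
    intro C hC k
    rw [h𝓒, Set.mem_iUnion₂] at hC ⊢
    obtain ⟨S, hSF, hC⟩ := hC
    exact ⟨S, hSF, chain_tail_closure hC k⟩
  -- members of RHS are numerical semigroups
  have hsgrp : ∀ X ∈ RHS, IsNumericalSemigroup X := by
    rintro X ⟨G, hGne, hGsub, rfl⟩
    refine ⟨?_, ?_, ?_⟩
    · rw [Set.mem_sInter]
      exact fun C hC => (hCprops C (hGsub hC)).1.1
    · intro a ha b hb
      rw [Set.mem_sInter] at ha hb ⊢
      exact fun C hC => (hCprops C (hGsub hC)).1.2.1 a (ha C hC) b (hb C hC)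
    · rw [Set.compl_sInter]
      refine Set.Finite.sUnion ((G.finite_toSet).image _) ?_
      rintro t ⟨C, hC, rfl⟩
      exact (hCprops C (hGsub hC)).1.2.2
  have hsubΔ : ∀ X ∈ RHS, X ⊆ Δ := by
    rintro X ⟨G, hGne, hGsub, rfl⟩
    obtain ⟨C, hC⟩ := hGne
    exact (Set.sInter_subset_of_mem hC).trans (hCprops C (hGsub hC)).2
  -- RHS is an R-variety
  have hRvar : IsRVariety RHS Δ := by
    refine ⟨hsgrp, ?_, hsubΔ, ?_, ?_⟩
    · -- Δ ∈ RHS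
      obtain ⟨S, hSF⟩ := hne
      have hΔeq : S ∪ {x ∈ Δ | 0 ≤ x} = Δ := by
        ext x
        simp only [Set.mem_union, Set.mem_setOf_eq]
        constructor
        · rintro (h | ⟨h, _⟩)
          · exact (hF S hSF).2 h
          · exact h
        · intro h
          exact Or.inr ⟨h, Nat.zero_le x⟩
      refine ⟨{Δ}, Finset.singleton_nonempty Δ, ?_, ?_⟩
      · intro C hC
        rw [Finset.coe_singleton, Set.mem_singleton_iff] at hC
        subst hC
        rw [h𝓒, Set.mem_iUnion₂]
        exact ⟨S, hSF, 0, hΔeq.symm⟩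
      · rw [Finset.coe_singleton, Set.sInter_singleton]
    · -- intersections
      rintro X ⟨G1, hG1ne, hG1sub, rfl⟩ Y ⟨G2, hG2ne, hG2sub, rfl⟩
      refine ⟨G1 ∪ G2, Finset.Nonempty.inl hG1ne, ?_, ?_⟩
      · rw [Finset.coe_union]
        exact Set.union_subset hG1sub hG2sub
      · rw [Finset.coe_union, Set.sInter_union]
    · -- step
      rintro X hX hXΔ
      obtain ⟨G, hGne, hGsub, rfl⟩ := hX
      have hXR : ⋂₀ (↑G : Set (Set ℕ)) ∈ RHS := ⟨G, hGne, hGsub, rfl⟩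
      have hXsub : ⋂₀ (↑G : Set (Set ℕ)) ⊆ Δ := hsubΔ _ hXR
      have hXfin : (⋂₀ (↑G : Set (Set ℕ)))ᶜ.Finite := (hsgrp _ hXR).2.2
      set Fx := FrobR Δ (⋂₀ (↑G : Set (Set ℕ))) with hFx
      have hDne : (Δ \ ⋂₀ (↑G : Set (Set ℕ))).Nonempty := by
        rw [Set.diff_nonempty]
        exact fun h => hXΔ (subset_antisymm hXsub h)
      have hDfin : (Δ \ ⋂₀ (↑G : Set (Set ℕ))).Finite :=
        hXfin.subset (fun y hy => hy.2)
      have hFmem : Fx ∈ Δ \ ⋂₀ (↑G : Set (Set ℕ)) :=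
        Nat.sSup_mem hDne hDfin.bddAbove
      have hFub : ∀ y ∈ Δ \ ⋂₀ (↑G : Set (Set ℕ)), y ≤ Fx :=
        fun y hy => le_csSup hDfin.bddAbove hy
      refine ⟨G.image (fun C => C ∪ {x ∈ Δ | Fx ≤ x}), hGne.image _, ?_, ?_⟩
      · intro D hD
        rw [Finset.coe_image] at hD
        obtain ⟨C, hC, rfl⟩ := hD
        exact hCtail C (hGsub hC) Fx
      · ext y
        simp only [Set.mem_union, Set.mem_singleton_iff, Set.mem_sInter,
          Finset.coe_image, Set.mem_image, Finset.mem_coe]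
        constructor
        · rintro (hy | rfl)
          · rintro D ⟨C, hC, rfl⟩
            exact Or.inl (hy C hC)
          · rintro D ⟨C, hC, rfl⟩
            exact Or.inr ⟨hFmem.1, le_refl Fx⟩
        · intro hy
          by_cases hyX : y ∈ ⋂₀ (↑G : Set (Set ℕ))
          · exact Or.inl hyX
          · rw [Set.mem_sInter] at hyX
            push_neg at hyX
            obtain ⟨C, hC, hyC⟩ := hyX
            have := hy (C ∪ {x ∈ Δ | Fx ≤ x}) ⟨C, hC, rfl⟩
            rcases this with h | ⟨hyΔ, hyF⟩
            · exact absurd h hyC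
            · have hynX : y ∉ ⋂₀ (↑G : Set (Set ℕ)) := by
                rw [Set.mem_sInter]
                push_neg
                exact ⟨C, hC, hyC⟩
              have := hFub y ⟨hyΔ, hynX⟩
              have : y = Fx := by omega
              exact Or.inr this
  -- F ⊆ RHS
  have hFsub : F ⊆ RHS := by
    intro S hSF
    obtain ⟨N, hN⟩ := tail_large (hF S hSF).1.2.2 Δ
    refine ⟨{S}, Finset.singleton_nonempty S, ?_, ?_⟩
    · intro C hC
      rw [Finset.coe_singleton, Set.mem_singleton_iff] at hC
      subst hC
      rw [h𝓒, Set.mem_iUnion₂]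
      exact ⟨C, hSF, N, hN.symm⟩
    · rw [Finset.coe_singleton, Set.sInter_singleton]
  apply subset_antisymm
  · exact hsmall RHS hRvar hFsub
  · rintro X ⟨G, hGne, hGsub, rfl⟩
    apply sInter_finset_mem hR G hGne
    intro C hC
    have hC𝓒 := hGsub hC
    rw [h𝓒, Set.mem_iUnion₂] at hC𝓒
    obtain ⟨S, hSF, n, rfl⟩ := hC𝓒
    exact chain_mem_of_mem hR (hFR hSF) n
end
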